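/- Let n ≥ 1, let {a_1,a_2}, {i_1,j_1}, {i_2,j_2} be 2-element subsets of [n] with |{i_1,j_1} ∩ {i_2,j_2}| ≤ 1, and let u ∈ S([n]^2) be the product of the two transpositions ((a_1,i_1),(a_1,j_1)) and ((a_2,i_2),(a_2,j_2)). Then u is stable of rank 1 if and only if {a_1,a_2} ∩ {i_1,j_1,i_2,j_2} = ∅. -/

import Mathlib

/-!
Both transpositions, hence `u`, preserve each row `{x} × [n]`, so `u (x, y) = (x, f x y)` with
`f a₁ = (i₁ j₁)`, `f a₂ = (i₂ j₂)` and `f x = 1` otherwise. Evaluating both sides of the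
stability equation at `(x, y, z)` shows that `u` is stable of rank 1 iff `f ∘ f x = f` for every
`x`, i.e. iff `f` is invariant under both transpositions. As `|{i₁, j₁} ∩ {i₂, j₂}| ≤ 1`, the
permutations `1`, `(i₁ j₁)` and `(i₂ j₂)` are pairwise distinct, so the fibres of `f` are `{a₁}`,
`{a₂}` and the rest, and `f` is invariant under a permutation iff it fixes `a₁` and `a₂`.
-/

/-- The permutation `u ⊗ 1` of `[n]³`, acting as `(x,y,z) ↦ (u(x,y), z)`. -/
def tensorOne {n : ℕ} (u : Equiv.Perm (Fin n × Fin n)) :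
    Equiv.Perm (Fin n × Fin n × Fin n) :=
  (Equiv.prodAssoc (Fin n) (Fin n) (Fin n)).permCongr (u.prodCongr (Equiv.refl (Fin n)))

/-- The permutation `1 ⊗ u` of `[n]³`, acting as `(x,y,z) ↦ (x, u(y,z))`. -/
def oneTensor {n : ℕ} (u : Equiv.Perm (Fin n × Fin n)) :
    Equiv.Perm (Fin n × Fin n × Fin n) :=
  (Equiv.refl (Fin n)).prodCongr u

/-- `u` is compatible with `v` if `(v ⊗ 1)(1 ⊗ u) = (1 ⊗ u)(v ⊗ 1)` in `S([n]³)`. -/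
def Compatible {n : ℕ} (u v : Equiv.Perm (Fin n × Fin n)) : Prop :=
  tensorOne v * oneTensor u = oneTensor u * tensorOne v

/-- `u` is stable of rank 1: `(u ⊗ 1)(1 ⊗ u) = (1 ⊗ u)(u ⊗ 1)`. -/
def StableRank1 {n : ℕ} (u : Equiv.Perm (Fin n × Fin n)) : Prop :=
  Compatible u u

open Equiv

def fiberwise {α β : Type*} (f : α → Perm β) : Perm (α × β) :=
  (Equiv.refl α).prodShear f

section Fiberwise

variable {α β : Type*}

@[simp]
theorem fiberwise_apply (f : α → Perm β) (x : α) (y : β) : fiberwise f (x, y) = (x, f x y) :=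
  rfl

theorem fiberwise_mul (f g : α → Perm β) : fiberwise f * fiberwise g = fiberwise (f * g) :=
  rfl

theorem swap_eq_fiberwise [DecidableEq α] [DecidableEq β] (a : α) (i j : β) :
    swap (a, i) (a, j) = fiberwise (Pi.mulSingle a (swap i j)) := by
  ext1 ⟨x, y⟩
  by_cases hx : x = a
  · subst hx
    simp only [fiberwise_apply, Pi.mulSingle_eq_same, swap_apply_def, Prod.mk.injEq, true_and]
    split_ifs <;> rfl
  · rw [swap_apply_of_ne_of_ne (by simp [hx]) (by simp [hx])]
    simp [hx]

end Fiberwise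

@[simp]
theorem tensorOne_apply {n : ℕ} (u : Perm (Fin n × Fin n)) (x y z : Fin n) :
    tensorOne u (x, y, z) = ((u (x, y)).1, (u (x, y)).2, z) := by
  simp [tensorOne, prodAssoc]

@[simp]
theorem oneTensor_apply {n : ℕ} (u : Perm (Fin n × Fin n)) (x y z : Fin n) :
    oneTensor u (x, y, z) = (x, u (y, z)) := by
  simp [oneTensor]

theorem compatible_fiberwise_iff {n : ℕ} (f g : Fin n → Perm (Fin n)) :
    Compatible (fiberwise f) (fiberwise g) ↔ ∀ x, f ∘ g x = f := by
  simp only [Compatible, Perm.ext_iff, Prod.forall, Perm.mul_apply, oneTensor_apply,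
    tensorOne_apply, fiberwise_apply, Prod.mk.injEq, true_and, funext_iff, Function.comp_apply]
  exact forall_congr' fun x => forall₂_congr fun y z => eq_comm

theorem stableRank1_fiberwise_iff {n : ℕ} (f : Fin n → Perm (Fin n)) :
    StableRank1 (fiberwise f) ↔ ∀ x, f ∘ f x = f :=
  compatible_fiberwise_iff f f

theorem swap_apply_eq_self_iff {α : Type*} [DecidableEq α] {i j a : α} (h : i ≠ j) :
    swap i j a = a ↔ a ≠ i ∧ a ≠ j := by
  rw [← not_iff_not, ← Ne, swap_apply_ne_self_iff]
  tauto

theorem swap_ne_swap_of_card_inter_le_one {α : Type*} [DecidableEq α] [Fintype α]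
    {i₁ j₁ i₂ j₂ : α} (h₁ : i₁ ≠ j₁) (h₂ : i₂ ≠ j₂)
    (hint : ({i₁, j₁} ∩ {i₂, j₂} : Finset α).card ≤ 1) : swap i₁ j₁ ≠ swap i₂ j₂ := by
  intro h
  have hsupp := congrArg Perm.support h
  rw [Perm.support_swap h₁, Perm.support_swap h₂] at hsupp
  rw [hsupp, Finset.inter_self, Finset.card_pair h₂] at hint
  omega

section TwoRows

variable {α : Type*} [DecidableEq α] {a₁ a₂ : α}

theorem mulSingle_mul_mulSingle_comp_eq_self_iff {G : Type*} [Group G] {g₁ g₂ : G}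
    (ha : a₁ ≠ a₂) (h₁ : g₁ ≠ 1) (h₂ : g₂ ≠ 1) (h₁₂ : g₁ ≠ g₂) (e : Perm α) :
    (Pi.mulSingle a₁ g₁ * Pi.mulSingle a₂ g₂ : α → G) ∘ e =
        Pi.mulSingle a₁ g₁ * Pi.mulSingle a₂ g₂ ↔
      e a₁ = a₁ ∧ e a₂ = a₂ := by
  have value (x : α) : (Pi.mulSingle a₁ g₁ * Pi.mulSingle a₂ g₂ : α → G) x =
      if x = a₁ then g₁ else if x = a₂ then g₂ else 1 := by
    by_cases hx₁ : x = a₁ <;> by_cases hx₂ : x = a₂ <;> simp_all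
  have fiber₁ (x : α) : (Pi.mulSingle a₁ g₁ * Pi.mulSingle a₂ g₂ : α → G) x = g₁ ↔ x = a₁ := by
    rw [value]; split_ifs <;> simp_all [Ne.symm]
  have fiber₂ (x : α) : (Pi.mulSingle a₁ g₁ * Pi.mulSingle a₂ g₂ : α → G) x = g₂ ↔ x = a₂ := by
    rw [value]; split_ifs <;> simp_all [Ne.symm]
  constructor
  · intro h
    exact ⟨(fiber₁ _).mp ((congrFun h a₁).trans ((fiber₁ a₁).mpr rfl)),
      (fiber₂ _).mp ((congrFun h a₂).trans ((fiber₂ a₂).mpr rfl))⟩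
  · rintro ⟨he₁, he₂⟩
    funext x
    simp only [Function.comp_apply, value, e.injective.eq_iff' he₁, e.injective.eq_iff' he₂]

theorem forall_mulSingle_mul_mulSingle_comp_eq_self_iff {g₁ g₂ : Perm α} (ha : a₁ ≠ a₂)
    (h₁ : g₁ ≠ 1) (h₂ : g₂ ≠ 1) (h₁₂ : g₁ ≠ g₂) :
    (∀ x, (Pi.mulSingle a₁ g₁ * Pi.mulSingle a₂ g₂ : α → Perm α) ∘
        (Pi.mulSingle a₁ g₁ * Pi.mulSingle a₂ g₂ : α → Perm α) x =
          Pi.mulSingle a₁ g₁ * Pi.mulSingle a₂ g₂) ↔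
      (g₁ a₁ = a₁ ∧ g₁ a₂ = a₂) ∧ (g₂ a₁ = a₁ ∧ g₂ a₂ = a₂) := by
  simp only [← mulSingle_mul_mulSingle_comp_eq_self_iff ha h₁ h₂ h₁₂]
  refine ⟨fun h => ⟨by simpa [ha.symm] using h a₁, by simpa [ha] using h a₂⟩, ?_⟩
  rintro ⟨hg₁, hg₂⟩ x
  by_cases hx₁ : x = a₁
  · simpa [hx₁, ha.symm] using hg₁
  by_cases hx₂ : x = a₂
  · simpa [hx₂, ha] using hg₂
  simp [hx₁, hx₂]

end TwoRows

theorem stmt_4_general (n : ℕ) (a1 a2 i1 j1 i2 j2 : Fin n)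
    (ha : a1 ≠ a2) (h1 : i1 ≠ j1) (h2 : i2 ≠ j2)
    (hint : (({i1, j1} ∩ {i2, j2} : Finset (Fin n))).card ≤ 1) :
    StableRank1 (Equiv.swap (a1, i1) (a1, j1) * Equiv.swap (a2, i2) (a2, j2)) ↔
      ({a1, a2} : Finset (Fin n)) ∩ {i1, j1, i2, j2} = ∅ := by
  rw [swap_eq_fiberwise, swap_eq_fiberwise, fiberwise_mul, stableRank1_fiberwise_iff,
    forall_mulSingle_mul_mulSingle_comp_eq_self_iff ha (mt swap_eq_one_iff.mp h1)
      (mt swap_eq_one_iff.mp h2) (swap_ne_swap_of_card_inter_le_one h1 h2 hint),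
    swap_apply_eq_self_iff h1, swap_apply_eq_self_iff h1, swap_apply_eq_self_iff h2,
    swap_apply_eq_self_iff h2, ← Finset.disjoint_iff_inter_eq_empty]
  simp only [Finset.disjoint_insert_left, Finset.disjoint_singleton_left, Finset.mem_insert,
    Finset.mem_singleton]
  tauto

theorem stmt_4 (n : ℕ) (hn : 1 ≤ n) (a1 a2 i1 j1 i2 j2 : Fin n)
    (ha : a1 ≠ a2) (h1 : i1 ≠ j1) (h2 : i2 ≠ j2)
    (hint : (({i1, j1} ∩ {i2, j2} : Finset (Fin n))).card ≤ 1) :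
    StableRank1 (Equiv.swap (a1, i1) (a1, j1) * Equiv.swap (a2, i2) (a2, j2)) ↔
      ({a1, a2} : Finset (Fin n)) ∩ {i1, j1, i2, j2} = ∅ :=
  stmt_4_general n a1 a2 i1 j1 i2 j2 ha h1 h2 hint
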